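/- Let φ_1,…,φ_n be unit vectors in ℂ^d with n ≥ 2 and n ≥ d. Then equality max_{j ≠ k} |⟨φ_j,φ_k⟩| = √((n−d)/(d(n−1))) holds if and only if (φ_1,…,φ_n) is an equiangular tight frame for ℂ^d. -/

import Mathlib

open scoped ComplexInnerProductSpace

noncomputable section

/-- `(φ_1, …, φ_n)` is an equiangular tight frame (ETF) for `ℂ^d`. -/
def IsETF (d n : ℕ) (φ : Fin n → EuclideanSpace ℂ (Fin d)) : Prop :=
  (∀ x : EuclideanSpace ℂ (Fin d), x = ((d : ℂ) / (n : ℂ)) • ∑ j, ⟪φ j, x⟫ • φ j) ∧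
  (∀ j, ‖φ j‖ = 1) ∧
  (∃ α : ℝ, 0 ≤ α ∧ ∀ j k, j ≠ k → ‖⟪φ j, φ k⟫‖ = α)

lemma offDiag_univ_nonempty {n : ℕ} (hn : 2 ≤ n) :
    ((Finset.univ : Finset (Fin n)).offDiag).Nonempty := by
  refine ⟨(⟨0, by omega⟩, ⟨1, by omega⟩), ?_⟩
  simp [Finset.mem_offDiag, Fin.ext_iff]

/-!
Let `Φ` be the matrix with columns `φ j`, `S = ΦΦᴴ` the frame operator and `G = ΦᴴΦ` the Gram
matrix. They have the same Frobenius norm, and `tr S = tr G = n`, so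
`‖S - (n/d) I‖² = ‖G‖² - n²/d = ∑_{j ≠ k} |⟪φ j, φ k⟫|² + n - n²/d`.
Hence the `n(n-1)` off-diagonal squares sum to `n(n-1) B² + ‖S - (n/d) I‖²`, where `B` is the
Welch bound. Their maximum is `B` exactly when the error term vanishes (the frame is tight) and
all of them are equal (the frame is equiangular).
-/

open Finset Matrix WithLp
open scoped InnerProductSpace

attribute [local instance] Matrix.frobeniusNormedAddCommGroup

theorem Finset.sum_sum_eq_sum_add_sum_offDiag {α M : Type*} [DecidableEq α] [AddCommMonoid M]
    (s : Finset α) (f : α → α → M) :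
    ∑ i ∈ s, ∑ j ∈ s, f i j = ∑ i ∈ s, f i i + ∑ p ∈ s.offDiag, f p.1 p.2 := by
  rw [← sum_product', ← diag_union_offDiag, sum_union (disjoint_diag_offDiag _), sum_diag]

theorem Finset.cast_card_offDiag {α R : Type*} [DecidableEq α] [Ring R] (s : Finset α) :
    (#s.offDiag : R) = #s * (#s - 1) := by
  rw [offDiag_card, Nat.cast_sub (Nat.le_mul_self _), Nat.cast_mul, mul_sub_one]

theorem Finset.sup'_eq_iff_of_sum_sq_eq {α : Type*} {s : Finset α} (hs : s.Nonempty)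
    {f : α → ℝ} (hf : ∀ i ∈ s, 0 ≤ f i) {B E : ℝ} (hB : 0 ≤ B) (hE : 0 ≤ E)
    (hsum : ∑ i ∈ s, f i ^ 2 = #s * B ^ 2 + E) :
    s.sup' hs f = B ↔ E = 0 ∧ ∃ a, 0 ≤ a ∧ ∀ i ∈ s, f i = a := by
  constructor
  · intro hsup
    have hle : ∀ i ∈ s, f i ^ 2 ≤ B ^ 2 := fun i hi =>
      pow_le_pow_left₀ (hf i hi) (hsup ▸ le_sup' f hi) 2
    have hgap : ∑ i ∈ s, (B ^ 2 - f i ^ 2) = -E := by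
      rw [sum_sub_distrib, sum_const, nsmul_eq_mul, hsum]
      ring
    have hgap_nonneg : 0 ≤ ∑ i ∈ s, (B ^ 2 - f i ^ 2) :=
      sum_nonneg fun i hi => sub_nonneg.2 (hle i hi)
    have hE0 : E = 0 := by linarith
    refine ⟨hE0, B, hB, fun i hi => ?_⟩
    have hfi := (sum_eq_zero_iff_of_nonneg fun i hi => sub_nonneg.2 (hle i hi)).1
      (by rw [hgap, hE0, neg_zero]) i hi
    exact (sq_eq_sq₀ (hf i hi) hB).1 (by linarith)
  · rintro ⟨rfl, a, ha, hfa⟩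
    have hcard : (0 : ℝ) < #s := by exact_mod_cast hs.card_pos
    rw [sum_congr rfl fun i hi => by rw [hfa i hi], sum_const, nsmul_eq_mul, add_zero] at hsum
    have haB : a = B := (sq_eq_sq₀ ha hB).1 (mul_left_cancel₀ hcard.ne' hsum)
    rw [sup'_congr hs rfl hfa, sup'_const, haB]

namespace Matrix

variable {𝕜 m n : Type*} [RCLike 𝕜] [Fintype m] [Fintype n]

lemma frobenius_norm_sq_eq_sum (M : Matrix m n 𝕜) :
    ‖M‖ ^ 2 = ∑ i, ∑ j, ‖M i j‖ ^ 2 := by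
  rw [frobenius_norm_def, ← Real.sqrt_eq_rpow, Real.sq_sqrt (by positivity)]
  simp only [Real.rpow_two]

lemma frobenius_norm_sq_eq_re_trace (M : Matrix m n 𝕜) :
    ‖M‖ ^ 2 = RCLike.re (M * Mᴴ).trace := by
  simp only [frobenius_norm_sq_eq_sum, trace, diag_apply, mul_apply, conjTranspose_apply,
    RCLike.star_def, RCLike.mul_conj, map_sum]
  simp

lemma frobenius_norm_conjTranspose_mul_self (A : Matrix m n 𝕜) : ‖Aᴴ * A‖ = ‖A * Aᴴ‖ := by
  refine (sq_eq_sq₀ (norm_nonneg _) (norm_nonneg _)).1 ?_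
  simp only [frobenius_norm_sq_eq_re_trace, conjTranspose_mul, conjTranspose_conjTranspose]
  rw [Matrix.mul_assoc, trace_mul_comm, Matrix.mul_assoc, Matrix.mul_assoc, Matrix.mul_assoc]

lemma frobenius_norm_sub_smul_one_sq [DecidableEq m] (M : Matrix m m 𝕜) (c : ℝ) :
    ‖M - (c : 𝕜) • 1‖ ^ 2 = ‖M‖ ^ 2 - 2 * c * RCLike.re M.trace + c ^ 2 * Fintype.card m := by
  simp only [frobenius_norm_sq_eq_re_trace, conjTranspose_sub, conjTranspose_smul,
    conjTranspose_one, sub_mul, mul_sub, trace_sub, smul_mul, trace_smul, Matrix.one_mul,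
    trace_conjTranspose, trace_one]
  simp [RCLike.smul_re]
  ring

end Matrix

section Frame

variable {𝕜 m ι : Type*} [RCLike 𝕜] [Fintype m]

def synthesisMatrix (φ : ι → EuclideanSpace 𝕜 m) : Matrix m ι 𝕜 :=
  Matrix.of fun i j => φ j i

lemma conjTranspose_synthesisMatrix_mul_self [Fintype ι] (φ : ι → EuclideanSpace 𝕜 m) :
    (synthesisMatrix φ)ᴴ * synthesisMatrix φ = gram 𝕜 φ := by
  ext j k
  simp [synthesisMatrix, mul_apply, gram_apply, EuclideanSpace.inner_eq_star_dotProduct,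
    dotProduct, mul_comm]

lemma synthesisMatrix_mul_conjTranspose_mulVec [Fintype ι] (φ : ι → EuclideanSpace 𝕜 m)
    (x : EuclideanSpace 𝕜 m) :
    toLp 2 ((synthesisMatrix φ * (synthesisMatrix φ)ᴴ) *ᵥ ofLp x) = ∑ j, ⟪φ j, x⟫_𝕜 • φ j := by
  ext i
  rw [← mulVec_mulVec]
  simp [synthesisMatrix, mulVec, dotProduct, EuclideanSpace.inner_eq_star_dotProduct, mul_comm]

lemma forall_eq_smul_sum_inner_smul_iff [Fintype ι] [DecidableEq m]
    (φ : ι → EuclideanSpace 𝕜 m) (a : 𝕜) :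
    (∀ x, x = a • ∑ j, ⟪φ j, x⟫_𝕜 • φ j) ↔
      a • (synthesisMatrix φ * (synthesisMatrix φ)ᴴ) = 1 := by
  simp only [← synthesisMatrix_mul_conjTranspose_mulVec, ← WithLp.toLp_smul, ← smul_mulVec]
  rw [ext_iff_mulVec]
  refine ⟨fun h v => ?_, fun h x => ?_⟩
  · rw [one_mulVec]
    exact (congrArg ofLp (h (toLp 2 v))).symm
  · rw [h, one_mulVec]

lemma sum_offDiag_norm_inner_sq_eq [Fintype ι] [DecidableEq m] [DecidableEq ι]
    (φ : ι → EuclideanSpace 𝕜 m) (hφ : ∀ j, ‖φ j‖ = 1) :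
    ∑ p ∈ univ.offDiag, ‖⟪φ p.1, φ p.2⟫_𝕜‖ ^ 2 =
      ‖synthesisMatrix φ * (synthesisMatrix φ)ᴴ -
          ((Fintype.card ι / Fintype.card m : ℝ) : 𝕜) • 1‖ ^ 2 +
        (Fintype.card ι : ℝ) ^ 2 / Fintype.card m - Fintype.card ι := by
  set A := synthesisMatrix φ
  have htrace : RCLike.re (A * Aᴴ).trace = Fintype.card ι := by
    rw [trace_mul_comm, conjTranspose_synthesisMatrix_mul_self]
    simp [trace, gram_apply, hφ]
  have hnorm : ‖A * Aᴴ‖ ^ 2 = Fintype.card ι + ∑ p ∈ univ.offDiag, ‖⟪φ p.1, φ p.2⟫_𝕜‖ ^ 2 := by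
    rw [← frobenius_norm_conjTranspose_mul_self, conjTranspose_synthesisMatrix_mul_self,
      frobenius_norm_sq_eq_sum, sum_sum_eq_sum_add_sum_offDiag]
    simp [gram_apply, hφ]
  rw [frobenius_norm_sub_smul_one_sq, hnorm, htrace]
  rcases eq_or_ne (Fintype.card m : ℝ) 0 with hd | hd
  · simp [hd]
  · field_simp
    ring

end Frame

theorem welch_bound_equality_iff_etf {d n : ℕ} (hn : 2 ≤ n) (hdn : d ≤ n)
    (φ : Fin n → EuclideanSpace ℂ (Fin d)) (hφ : ∀ j, ‖φ j‖ = 1) :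
    (Finset.univ.offDiag).sup' (offDiag_univ_nonempty hn)
        (fun p => ‖⟪φ p.1, φ p.2⟫‖) =
      Real.sqrt (((n : ℝ) - d) / (d * ((n : ℝ) - 1))) ↔
    IsETF d n φ := by
  have hd : d ≠ 0 := by
    rintro rfl
    simpa [Subsingleton.elim (φ ⟨0, by omega⟩) 0] using hφ ⟨0, by omega⟩
  have hn2 : (2 : ℝ) ≤ n := by exact_mod_cast hn
  have hwelch : (n * (n - 1) : ℝ) * √(((n : ℝ) - d) / (d * ((n : ℝ) - 1))) ^ 2 = n ^ 2 / d - n := by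
    rw [Real.sq_sqrt (div_nonneg (sub_nonneg.2 (by exact_mod_cast hdn))
      (mul_nonneg (Nat.cast_nonneg d) (by linarith)))]
    have : (n : ℝ) - 1 ≠ 0 := by linarith
    field_simp
  have hsum := sum_offDiag_norm_inner_sq_eq φ hφ
  simp only [Fintype.card_fin] at hsum
  have htight : (∀ x : EuclideanSpace ℂ (Fin d), x = ((d : ℂ) / (n : ℂ)) • ∑ j, ⟪φ j, x⟫ • φ j) ↔
      ‖synthesisMatrix φ * (synthesisMatrix φ)ᴴ - ((n / d : ℝ) : ℂ) • 1‖ ^ 2 = 0 := by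
    rw [forall_eq_smul_sum_inner_smul_iff, sq_eq_zero_iff, norm_eq_zero, sub_eq_zero,
      ← eq_inv_smul_iff₀ (div_ne_zero (Nat.cast_ne_zero.2 hd) (Nat.cast_ne_zero.2 (by omega))),
      inv_div]
    push_cast
    rfl
  rw [sup'_eq_iff_of_sum_sq_eq _ (fun _ _ => norm_nonneg _) (Real.sqrt_nonneg _) (sq_nonneg _)
    (by rw [hsum, cast_card_offDiag, card_univ, Fintype.card_fin, hwelch]; ring), IsETF, htight]
  simp [hφ, mem_offDiag]
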